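/- arXiv:2503.09545 — 3 statements merged into one kernel-verified Lean document; each statement's English description precedes it below -/
import Mathlib

section
/- Strengthened completeness of the commit compilation: for every plan π = (a₁,…,aₙ) of the STRIPS planning task P there exists a plan π' = (a'₁,…,a'ₙ) of the commit task P_c of the same length n such that ρ(a'_k) = a_k for every k = 1,…,n; in particular c(π') = c(π). -/
/-- A STRIPS action: positive/negative preconditions, add/delete effects, nonnegative cost. -/
structure StripsAction (α : Type*) where
  prePos : Set α
  preNeg : Set α
  add : Set α
  del : Set α
  cost : NNReal

variable {α : Type*}

/-- An action is applicable in state `s` iff `pre⁺ ⊆ s` and `pre⁻ ∩ s = ∅`. -/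
def StripsAction.Applicable (a : StripsAction α) (s : Set α) : Prop :=
  a.prePos ⊆ s ∧ a.preNeg ∩ s = ∅

/-- Result of applying an action: `γ(s,a) = (s \ del(a)) ∪ add(a)`. -/
def StripsAction.apply (a : StripsAction α) (s : Set α) : Set α :=
  (s \ a.del) ∪ a.add

/-- `Γ(s, π)`: the state resulting from applying the sequence `π` in `s`. -/
def seqResult (s : Set α) : List (StripsAction α) → Set α
  | [] => s
  | a :: π => seqResult (a.apply s) π

/-- A sequence of actions is applicable in `s` if each action is applicable in the
state resulting from the previous ones. -/
def SeqApplicable (s : Set α) : List (StripsAction α) → Prop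
  | [] => True
  | a :: π => a.Applicable s ∧ SeqApplicable (a.apply s) π

/-- Cost of a plan: sum of the costs of its actions. -/
def planCost (π : List (StripsAction α)) : NNReal :=
  (π.map StripsAction.cost).sum

/-- A STRIPS planning task `P = ⟨F, A, I, G⟩`. -/
structure StripsTask (α : Type*) where
  F : Set α
  A : Set (StripsAction α)
  I : Set α
  G : Set α

/-- Well-formedness of a STRIPS planning task: `F` and `A` finite, `I ⊆ F`, `G ⊆ F`,
all action components within `F`, and `add(a) ∩ del(a) = ∅`. -/
def StripsTask.WellFormed (T : StripsTask α) : Prop :=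
  T.F.Finite ∧ T.A.Finite ∧ T.I ⊆ T.F ∧ T.G ⊆ T.F ∧
    ∀ a ∈ T.A, a.prePos ⊆ T.F ∧ a.preNeg ⊆ T.F ∧ a.add ⊆ T.F ∧ a.del ⊆ T.F ∧
      a.add ∩ a.del = ∅

/-- A plan for a task: a sequence of actions of the task, applicable in `I`,
whose result satisfies `G`. -/
def StripsTask.IsPlan (T : StripsTask α) (π : List (StripsAction α)) : Prop :=
  (∀ a ∈ π, a ∈ T.A) ∧ SeqApplicable T.I π ∧ T.G ⊆ seqResult T.I π

/-- A task is solvable if it has a plan. -/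
def StripsTask.Solvable (T : StripsTask α) : Prop := ∃ π, T.IsPlan π

/-- An optimal plan: a plan of minimal cost among all plans. -/
def StripsTask.OptimalPlan (T : StripsTask α) (π : List (StripsAction α)) : Prop :=
  T.IsPlan π ∧ ∀ π₂, T.IsPlan π₂ → planCost π ≤ planCost π₂

/-- Pending goals: `Ḡ = {g ∈ G \ I | ∃ a ∈ A, g ∈ add(a)}`. -/
def pending (T : StripsTask α) : Set α :=
  {g | g ∈ T.G \ T.I ∧ ∃ a ∈ T.A, g ∈ a.add}

/-- The map `g ↦ g-commit` introduces fresh fluents: it is injective on the pending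
goals and its values on them avoid `F`. -/
def FreshCommit (T : StripsTask α) (commit : α → α) : Prop :=
  Set.InjOn commit (pending T) ∧ ∀ g ∈ pending T, commit g ∉ T.F

/-- Commit version of an action `a ∈ A^G` for a subset `i ⊆ add(a) ∩ Ḡ`. -/
def commitAction (commit : α → α) (a : StripsAction α) (i : Set α) : StripsAction α :=
  ⟨a.prePos, a.preNeg ∪ commit '' i, a.add ∪ commit '' i, a.del, a.cost⟩

/-- Force-commit version of an action `a ∈ A^¬G`. -/
def forceCommitAction (commit : α → α) (Gbar : Set α) (a : StripsAction α) : StripsAction α :=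
  ⟨a.prePos, a.preNeg ∪ commit '' (a.del ∩ Gbar), a.add, a.del, a.cost⟩

/-- Simultaneous version of an action `a ∈ A^G*` for a subset `j ⊆ add(a) ∩ Ḡ`. -/
def simAction (commit : α → α) (Gbar : Set α) (a : StripsAction α) (j : Set α) : StripsAction α :=
  ⟨a.prePos, a.preNeg ∪ commit '' j ∪ commit '' (a.del ∩ Gbar),
    a.add ∪ commit '' j, a.del, a.cost⟩

/-- `CompiledFrom T commit a' a` holds iff `a'` is one of the actions of the commit
task built from the original action `a ∈ A`, i.e. `ρ(a') = a`. -/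
def CompiledFrom (T : StripsTask α) (commit : α → α) (a' a : StripsAction α) : Prop :=
  a ∈ T.A ∧
    ((a.add ∩ pending T ≠ ∅ ∧ a.del ∩ pending T = ∅ ∧
        ∃ i ⊆ a.add ∩ pending T, a' = commitAction commit a i) ∨
     (a.add ∩ pending T = ∅ ∧ a.del ∩ pending T ≠ ∅ ∧
        a' = forceCommitAction commit (pending T) a) ∨
     (a.add ∩ pending T ≠ ∅ ∧ a.del ∩ pending T ≠ ∅ ∧
        ∃ j ⊆ a.add ∩ pending T, a' = simAction commit (pending T) a j) ∨
     (a.add ∩ pending T = ∅ ∧ a.del ∩ pending T = ∅ ∧ a' = a))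

/-- The commit planning task `P_c = ⟨F ∪ F', A_c, I, G_c⟩`. -/
def commitTask (T : StripsTask α) (commit : α → α) : StripsTask α :=
  ⟨T.F ∪ commit '' pending T,
   {a' | ∃ a, CompiledFrom T commit a' a},
   T.I,
   (T.G \ pending T) ∪ commit '' pending T⟩

/-! A plan is lifted action by action: each action `a` becomes its `simAction` version that
commits exactly the pending goals that `a` adds and no later action touches; according to whether
`a` adds or deletes pending goals this is a compiled action of the right class. A committed goal is
never touched again, so its commit fluent survives to the end and no later action requires it to be
absent. Every pending goal is reached although it is not initial, so some action touches it, and the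
last such action must add it and therefore commits it. -/

def StripsAction.Touches (a : StripsAction α) (g : α) : Prop :=
  g ∈ a.add ∨ g ∈ a.del

lemma StripsAction.mem_apply_iff_of_not_touches {a : StripsAction α} {s : Set α} {g : α}
    (h : ¬ a.Touches g) : g ∈ a.apply s ↔ g ∈ s := by
  simp only [StripsAction.Touches, not_or] at h
  simp [StripsAction.apply, h.1, h.2]

lemma mem_seqResult_iff_of_forall_not_touches {g : α} :
    ∀ {π : List (StripsAction α)} {s : Set α}, (∀ b ∈ π, ¬ b.Touches g) →
      (g ∈ seqResult s π ↔ g ∈ s)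
  | [], _, _ => Iff.rfl
  | b :: π, s, h => by
    rw [List.forall_mem_cons] at h
    rw [seqResult, mem_seqResult_iff_of_forall_not_touches h.2,
      StripsAction.mem_apply_iff_of_not_touches h.1]

section Lift

variable (commit : α → α) (Gbar : Set α)

def commitSet (a : StripsAction α) (rest : List (StripsAction α)) : Set α :=
  {g | g ∈ a.add ∩ Gbar ∧ ∀ b ∈ rest, ¬ b.Touches g}

def liftPlan : List (StripsAction α) → List (StripsAction α)
  | [] => []
  | a :: rest => simAction commit Gbar a (commitSet Gbar a rest) :: liftPlan rest

def committedGoals : List (StripsAction α) → Set α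
  | [] => ∅
  | a :: rest => commitSet Gbar a rest ∪ committedGoals rest

lemma planCost_liftPlan (π : List (StripsAction α)) :
    planCost (liftPlan commit Gbar π) = planCost π := by
  induction π with
  | nil => rfl
  | cons a rest ih =>
    simp only [planCost, liftPlan, List.map_cons, List.sum_cons] at ih ⊢
    rw [ih]
    rfl

variable {commit Gbar}

lemma simAction_apply {a : StripsAction α} {s C i : Set α} (hC : ∀ g ∈ C, commit g ∉ a.del) :
    (simAction commit Gbar a i).apply (s ∪ commit '' C) = a.apply s ∪ commit '' (C ∪ i) := by
  have hCdel : commit '' C \ a.del = commit '' C :=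
    sdiff_eq_left.2 (Set.disjoint_left.2 (by rintro _ ⟨g, hg, rfl⟩; exact hC g hg))
  simp only [StripsAction.apply, simAction, Set.union_sdiff_distrib, hCdel, Set.image_union]
  ac_rfl

lemma applicable_simAction {a : StripsAction α} {s C i : Set α} (ha : a.Applicable s)
    (hinj : Set.InjOn commit Gbar) (hs : ∀ g ∈ Gbar, commit g ∉ s)
    (hneg : ∀ g ∈ Gbar, commit g ∉ a.preNeg) (hC : C ⊆ Gbar) (hi : i ⊆ Gbar)
    (hCa : ∀ g ∈ C, g ∉ i ∧ g ∉ a.del) :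
    (simAction commit Gbar a i).Applicable (s ∪ commit '' C) := by
  refine ⟨ha.1.trans Set.subset_union_left, Set.eq_empty_iff_forall_notMem.2 ?_⟩
  have hcommit : ∀ g ∈ i ∪ a.del ∩ Gbar, commit g ∉ s ∪ commit '' C := by
    rintro g hg (hgs | ⟨c, hc, hcg⟩)
    · exact hs g (hg.elim (hi ·) (·.2)) hgs
    · obtain rfl := hinj (hC hc) (hg.elim (hi ·) (·.2)) hcg
      exact hg.elim (hCa c hc).1 fun h => (hCa c hc).2 h.1
  rintro _ ⟨(hpre | ⟨g, hg, rfl⟩) | ⟨g, hg, rfl⟩, hmem⟩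
  · rcases hmem with hmem | ⟨c, hc, rfl⟩
    · exact Set.eq_empty_iff_forall_notMem.1 ha.2 _ ⟨hpre, hmem⟩
    · exact hneg c (hC hc) hpre
  · exact hcommit g (Or.inl hg) hmem
  · exact hcommit g (Or.inr hg) hmem

section Fresh

variable {F : Set α} (hfresh : ∀ g ∈ Gbar, commit g ∉ F)
include hfresh

lemma seqResult_liftPlan :
    ∀ {π : List (StripsAction α)} {s C : Set α}, (∀ b ∈ π, b.del ⊆ F) → C ⊆ Gbar →
      seqResult (s ∪ commit '' C) (liftPlan commit Gbar π) =
        seqResult s π ∪ commit '' (C ∪ committedGoals Gbar π)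
  | [], _, _, _, _ => by simp [seqResult, liftPlan, committedGoals]
  | a :: rest, s, C, hπ, hC => by
    rw [List.forall_mem_cons] at hπ
    have hCi : C ∪ commitSet Gbar a rest ⊆ Gbar := Set.union_subset hC fun g hg => hg.1.2
    rw [liftPlan, seqResult, simAction_apply fun g hg hdel => hfresh g (hC hg) (hπ.1 hdel),
      seqResult_liftPlan hπ.2 hCi, committedGoals, Set.union_assoc]
    rfl

lemma seqApplicable_liftPlan (hinj : Set.InjOn commit Gbar) :
    ∀ {π : List (StripsAction α)} {s C : Set α},
      (∀ b ∈ π, b.preNeg ⊆ F ∧ b.add ⊆ F ∧ b.del ⊆ F) → s ⊆ F → C ⊆ Gbar →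
      (∀ g ∈ C, ∀ b ∈ π, ¬ b.Touches g) → SeqApplicable s π →
      SeqApplicable (s ∪ commit '' C) (liftPlan commit Gbar π)
  | [], _, _, _, _, _, _, _ => trivial
  | a :: rest, s, C, hπ, hs, hC, hCπ, ⟨ha, hrest⟩ => by
    rw [List.forall_mem_cons] at hπ
    obtain ⟨⟨hnegF, haddF, hdelF⟩, hπ⟩ := hπ
    have hCa : ∀ g ∈ C, g ∉ a.add ∧ g ∉ a.del := fun g hg =>
      not_or.1 (hCπ g hg a List.mem_cons_self)
    have hi : commitSet Gbar a rest ⊆ Gbar := fun g hg => hg.1.2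
    refine ⟨applicable_simAction ha hinj (fun g hg h => hfresh g hg (hs h))
      (fun g hg h => hfresh g hg (hnegF h)) hC hi
      (fun g hg => ⟨fun h => (hCa g hg).1 h.1.1, (hCa g hg).2⟩), ?_⟩
    rw [simAction_apply fun g hg hdel => hfresh g (hC hg) (hdelF hdel)]
    refine seqApplicable_liftPlan hinj hπ ?_ (Set.union_subset hC hi) ?_ hrest
    · rintro g (⟨hgs, -⟩ | hga)
      exacts [hs hgs, haddF hga]
    · rintro g (hg | hg) b hb
      exacts [hCπ g hg b (List.mem_cons_of_mem a hb), hg.2 b hb]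

end Fresh

lemma mem_committedGoals {g : α} (hg : g ∈ Gbar) :
    ∀ {π : List (StripsAction α)} {s : Set α}, (∀ b ∈ π, b.add ∩ b.del = ∅) →
      g ∈ seqResult s π → (∃ b ∈ π, b.Touches g) → g ∈ committedGoals Gbar π
  | [], _, _, _, ⟨_, hb, _⟩ => absurd hb List.not_mem_nil
  | a :: rest, s, hπ, hres, htouch => by
    rw [List.forall_mem_cons] at hπ
    by_cases hrest : ∃ b ∈ rest, b.Touches g
    · exact Or.inr (mem_committedGoals hg hπ.2 hres hrest)
    · push Not at hrest
      have hga : g ∈ a.apply s := (mem_seqResult_iff_of_forall_not_touches hrest).1 hres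
      have hadd : g ∈ a.add := by
        rcases hga with ⟨-, hdel⟩ | hadd
        · obtain ⟨b, hb, hbg⟩ := htouch
          rcases List.mem_cons.1 hb with rfl | hb
          exacts [hbg.resolve_right hdel, absurd hbg (hrest b hb)]
        · exact hadd
      exact Or.inl ⟨⟨hadd, hg⟩, hrest⟩

end Lift

lemma compiledFrom_simAction {T : StripsTask α} (commit : α → α) {a : StripsAction α}
    (haA : a ∈ T.A) {i : Set α} (hi : i ⊆ a.add ∩ pending T) :
    CompiledFrom T commit (simAction commit (pending T) a i) a := by
  refine ⟨haA, ?_⟩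
  by_cases hadd : a.add ∩ pending T = ∅ <;> by_cases hdel : a.del ∩ pending T = ∅
  · have hi : i = ∅ := Set.subset_empty_iff.1 (hadd ▸ hi)
    exact Or.inr (Or.inr (Or.inr ⟨hadd, hdel, by simp [simAction, hi, hdel]⟩))
  · have hi : i = ∅ := Set.subset_empty_iff.1 (hadd ▸ hi)
    exact Or.inr (Or.inl ⟨hadd, hdel, by simp [simAction, forceCommitAction, hi]⟩)
  · exact Or.inl ⟨hadd, hdel, i, hi, by simp [simAction, commitAction, hdel]⟩
  · exact Or.inr (Or.inr (Or.inl ⟨hadd, hdel, i, hi, rfl⟩))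

lemma forall₂_compiledFrom_liftPlan {T : StripsTask α} (commit : α → α) :
    ∀ {π : List (StripsAction α)}, (∀ a ∈ π, a ∈ T.A) →
      List.Forall₂ (CompiledFrom T commit) (liftPlan commit (pending T) π) π
  | [], _ => List.Forall₂.nil
  | a :: rest, h => by
    rw [List.forall_mem_cons] at h
    exact .cons (compiledFrom_simAction commit h.1 fun g hg => hg.1)
      (forall₂_compiledFrom_liftPlan commit h.2)

/-- Strengthened completeness: every plan `π` of `P` lifts to a plan `π'` of `P_c`
of the same length with `ρ(a'_k) = a_k` for every `k`, hence `c(π') = c(π)`. -/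
theorem commit_compilation_complete_strong {α : Type*} (T : StripsTask α) (commit : α → α)
    (hwf : T.WellFormed) (hfresh : FreshCommit T commit) :
    ∀ π : List (StripsAction α), T.IsPlan π →
      ∃ π' : List (StripsAction α), (commitTask T commit).IsPlan π' ∧
        List.Forall₂ (CompiledFrom T commit) π' π ∧ planCost π' = planCost π := by
  rintro π ⟨hA, happ, hG⟩
  obtain ⟨-, -, hIF, -, hactF⟩ := hwf
  have hπF (b) (hb : b ∈ π) := (hactF b (hA b hb)).2
  have hcompiled := forall₂_compiledFrom_liftPlan (T := T) commit hA
  have hmem : ∀ a' ∈ liftPlan commit (pending T) π, a' ∈ (commitTask T commit).A :=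
    ((List.forall₂_and_left _ _).1 (hcompiled.imp fun _ a h => ⟨⟨a, h⟩, h⟩)).1
  have happ' := seqApplicable_liftPlan (C := ∅) hfresh.2 hfresh.1
    (fun b hb => (hπF b hb).imp_right (.imp_right And.left)) hIF (Set.empty_subset _) (by simp) happ
  have hres := seqResult_liftPlan (s := T.I) hfresh.2 (fun b hb => (hπF b hb).2.2.1)
    (Set.empty_subset _)
  rw [Set.image_empty, Set.union_empty] at happ' hres
  refine ⟨_, ⟨hmem, happ', ?_⟩, hcompiled, planCost_liftPlan commit _ π⟩
  change T.G \ pending T ∪ commit '' pending T ⊆ seqResult T.I _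
  rw [hres, Set.empty_union]
  rintro g (⟨hg, -⟩ | ⟨g, hg, rfl⟩)
  · exact Or.inl (hG hg)
  · refine Or.inr ⟨g, mem_committedGoals hg (fun b hb => (hπF b hb).2.2.2) (hG hg.1.1) ?_, rfl⟩
    by_contra! huntouched
    exact hg.1.2 ((mem_seqResult_iff_of_forall_not_touches huntouched).1 (hG hg.1.1))
end

section
/- Reachability invariant of the commit compilation: for every action sequence π' over A_c that is applicable in the initial state I of the commit task P_c, and for every pending goal g ∈ Ḡ, if g-commit ∈ Γ(I, π') then g ∈ Γ(I, π'). -/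
variable {α : Type*}

theorem SeqApplicable.invariant_seqResult {P : Set α → Prop} {s : Set α}
    {π : List (StripsAction α)} (hπ : SeqApplicable s π) (hs : P s)
    (hstep : ∀ a ∈ π, ∀ t, a.Applicable t → P t → P (a.apply t)) : P (seqResult s π) := by
  induction π generalizing s with
  | nil => exact hs
  | cons a π ih =>
    exact ih hπ.2 (hstep a List.mem_cons_self s hπ.1 hs)
      fun b hb => hstep b (List.mem_cons_of_mem a hb)

theorem StripsAction.Applicable.notMem_of_mem_preNeg {a : StripsAction α} {s : Set α} {x : α}
    (ha : a.Applicable s) (hx : x ∈ a.preNeg) : x ∉ s :=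
  fun hxs => (Set.eq_empty_iff_forall_notMem.mp ha.2) x ⟨hx, hxs⟩

namespace CompiledFrom

variable {T : StripsTask α} {commit : α → α} {a' a : StripsAction α}

theorem del_eq (h : CompiledFrom T commit a' a) : a'.del = a.del := by
  rcases h.2 with ⟨-, -, i, -, rfl⟩ | ⟨-, -, rfl⟩ | ⟨-, -, j, -, rfl⟩ | ⟨-, -, rfl⟩ <;> rfl

theorem add_subset_add (h : CompiledFrom T commit a' a) : a.add ⊆ a'.add := by
  rcases h.2 with ⟨-, -, i, -, rfl⟩ | ⟨-, -, rfl⟩ | ⟨-, -, j, -, rfl⟩ | ⟨-, -, rfl⟩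
  exacts [Set.subset_union_left, subset_rfl, Set.subset_union_left, subset_rfl]

theorem add_subset (h : CompiledFrom T commit a' a) :
    a'.add ⊆ a.add ∪ commit '' (a.add ∩ pending T) := by
  rcases h.2 with ⟨-, -, i, hi, rfl⟩ | ⟨-, -, rfl⟩ | ⟨-, -, j, hj, rfl⟩ | ⟨-, -, rfl⟩
  exacts [Set.union_subset_union_right _ (Set.image_mono hi), Set.subset_union_left,
    Set.union_subset_union_right _ (Set.image_mono hj), Set.subset_union_left]

theorem commit_mem_preNeg {g : α} (h : CompiledFrom T commit a' a)
    (hg : g ∈ a.del ∩ pending T) : commit g ∈ a'.preNeg := by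
  rcases h.2 with ⟨-, hdel, -⟩ | ⟨-, -, rfl⟩ | ⟨-, -, j, -, rfl⟩ | ⟨-, hdel, rfl⟩
  · exact absurd hdel (Set.nonempty_iff_ne_empty.mp ⟨g, hg⟩)
  · exact Or.inr (Set.mem_image_of_mem commit hg)
  · exact Or.inr (Set.mem_image_of_mem commit hg)
  · exact absurd hdel (Set.nonempty_iff_ne_empty.mp ⟨g, hg⟩)

end CompiledFrom

def CommitSound (T : StripsTask α) (commit : α → α) (s : Set α) : Prop :=
  ∀ g ∈ pending T, commit g ∈ s → g ∈ s

/-- A commit fluent survives only if its goal is not deleted (the compiled action then requires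
the commit to be absent), and it is added only together with its goal. -/
theorem CommitSound.apply {T : StripsTask α} {commit : α → α} {a' a : StripsAction α}
    {s : Set α} (hinj : Set.InjOn commit (pending T)) (ha : CompiledFrom T commit a' a)
    (hfresh : ∀ g ∈ pending T, commit g ∉ a.add) (happ : a'.Applicable s)
    (hs : CommitSound T commit s) : CommitSound T commit (a'.apply s) := by
  intro g hg hcg
  rcases hcg with ⟨hcs, -⟩ | hca
  · have hgdel : g ∉ a'.del := by
      rw [ha.del_eq]
      exact fun hgd => happ.notMem_of_mem_preNeg (ha.commit_mem_preNeg ⟨hgd, hg⟩) hcs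
    exact Or.inl ⟨hs g hg hcs, hgdel⟩
  · rcases ha.add_subset hca with hca | ⟨x, ⟨hxa, hx⟩, hxg⟩
    · exact absurd hca (hfresh g hg)
    · rw [← hinj hx hg hxg]
      exact Or.inr (ha.add_subset_add hxa)

/-- Reachability invariant: along any action sequence over `A_c` applicable in the
initial state of `P_c`, a commit fluent in the final state implies its goal holds. -/
theorem commit_reachability_invariant {α : Type*} (T : StripsTask α) (commit : α → α)
    (hwf : T.WellFormed) (hfresh : FreshCommit T commit)
    (π' : List (StripsAction α)) (hmem : ∀ a' ∈ π', a' ∈ (commitTask T commit).A)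
    (happ : SeqApplicable (commitTask T commit).I π') :
    ∀ g ∈ pending T,
      commit g ∈ seqResult (commitTask T commit).I π' →
        g ∈ seqResult (commitTask T commit).I π' := by
  obtain ⟨-, -, hIF, -, hactions⟩ := hwf
  obtain ⟨hinj, hnotF⟩ := hfresh
  refine happ.invariant_seqResult (P := CommitSound T commit)
    (fun g hg hcg => absurd (hIF hcg) (hnotF g hg)) fun a' ha' t hat ht => ?_
  obtain ⟨a, ha⟩ := hmem a' ha'
  have hfresh_add : ∀ g ∈ pending T, commit g ∉ a.add :=
    fun g hg hca => hnotF g hg ((hactions a ha.1).2.2.1 hca)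
  exact ht.apply hinj ha hfresh_add hat
end

section
/- Projection lemma for the commit compilation: for every a' ∈ A_c and every state s ⊆ F ∪ F', if a' is applicable in s, then its original counterpart ρ(a') ∈ A is applicable in s ∩ F, and γ(s ∩ F, ρ(a')) = γ(s, a') ∩ F. -/
variable {α : Type*}

namespace StripsAction

variable {a b : StripsAction α} {s F X : Set α}

theorem Applicable.of_pre_subset (hb : b.Applicable s) (hpos : a.prePos ⊆ b.prePos)
    (hneg : a.preNeg ⊆ b.preNeg) : a.Applicable s :=
  ⟨hpos.trans hb.1, Set.subset_eq_empty (Set.inter_subset_inter_left s hneg) hb.2⟩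

theorem Applicable.inter (ha : a.Applicable s) (hpos : a.prePos ⊆ F) :
    a.Applicable (s ∩ F) :=
  ⟨Set.subset_inter ha.1 hpos,
    Set.subset_eq_empty (Set.inter_subset_inter_right _ Set.inter_subset_left) ha.2⟩

theorem apply_inter_of_add_subset (hadd : a.add ⊆ F) : a.apply (s ∩ F) = a.apply s ∩ F := by
  rw [apply, apply, Set.union_inter_distrib_right, Set.inter_eq_left.2 hadd,
    Set.inter_sdiff_right_comm]

theorem apply_inter_congr (hdel : a.del = b.del) (hadd : a.add ∩ F = b.add ∩ F) :
    a.apply s ∩ F = b.apply s ∩ F := by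
  simp only [apply, Set.union_inter_distrib_right, hdel, hadd]

def ExtendsBy (a' a : StripsAction α) (X : Set α) : Prop :=
  a'.prePos = a.prePos ∧ a.preNeg ⊆ a'.preNeg ∧ a'.add = a.add ∪ X ∧ a'.del = a.del

theorem ExtendsBy.projection {a' : StripsAction α} (hext : a'.ExtendsBy a X)
    (hX : Disjoint X F) (hpos : a.prePos ⊆ F) (hadd : a.add ⊆ F) (happ : a'.Applicable s) :
    a.Applicable (s ∩ F) ∧ a.apply (s ∩ F) = a'.apply s ∩ F := by
  obtain ⟨hpos', hneg', hadd', hdel'⟩ := hext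
  refine ⟨(happ.of_pre_subset hpos'.ge hneg').inter hpos, ?_⟩
  rw [apply_inter_of_add_subset hadd]
  refine apply_inter_congr hdel'.symm ?_
  rw [hadd', Set.union_inter_distrib_right, hX.inter_eq, Set.union_empty]

end StripsAction

theorem FreshCommit.disjoint_image {T : StripsTask α} {commit : α → α}
    (hfresh : FreshCommit T commit) {X : Set α} (hX : X ⊆ pending T) :
    Disjoint (commit '' X) T.F := by
  refine Set.disjoint_left.2 ?_
  rintro _ ⟨g, hg, rfl⟩
  exact hfresh.2 g (hX hg)

theorem CompiledFrom.exists_extendsBy {T : StripsTask α} {commit : α → α}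
    {a' a : StripsAction α} (hcf : CompiledFrom T commit a' a) :
    ∃ X ⊆ pending T, a'.ExtendsBy a (commit '' X) := by
  rcases hcf.2 with ⟨-, -, i, hi, rfl⟩ | ⟨-, -, rfl⟩ | ⟨-, -, j, hj, rfl⟩ | ⟨-, -, rfl⟩
  · exact ⟨i, hi.trans Set.inter_subset_right, rfl, Set.subset_union_left, rfl, rfl⟩
  · exact ⟨∅, Set.empty_subset _, rfl, Set.subset_union_left, by simp [forceCommitAction], rfl⟩
  · exact ⟨j, hj.trans Set.inter_subset_right, rfl,
      Set.subset_union_left.trans Set.subset_union_left, rfl, rfl⟩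
  · exact ⟨∅, Set.empty_subset _, rfl, subset_rfl, by simp, rfl⟩

theorem commit_compilation_projection_general {α : Type*} (T : StripsTask α) (commit : α → α)
    (hwf : T.WellFormed) (hfresh : FreshCommit T commit)
    (a' a : StripsAction α) (hcf : CompiledFrom T commit a' a)
    (s : Set α)
    (happ : a'.Applicable s) :
    a.Applicable (s ∩ T.F) ∧ a.apply (s ∩ T.F) = a'.apply s ∩ T.F := by
  obtain ⟨X, hX, hext⟩ := hcf.exists_extendsBy
  obtain ⟨hpos, -, hadd, -⟩ := hwf.2.2.2.2 a hcf.1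
  exact hext.projection (hfresh.disjoint_image hX) hpos hadd happ

/-- Projection lemma: if a compiled action `a'` (with `ρ(a') = a`) is applicable in a
state `s ⊆ F ∪ F'`, then `a` is applicable in `s ∩ F` and
`γ(s ∩ F, a) = γ(s, a') ∩ F`. -/
theorem commit_compilation_projection {α : Type*} (T : StripsTask α) (commit : α → α)
    (hwf : T.WellFormed) (hfresh : FreshCommit T commit)
    (a' a : StripsAction α) (hcf : CompiledFrom T commit a' a)
    (s : Set α) (hs : s ⊆ (commitTask T commit).F)
    (happ : a'.Applicable s) :
    a.Applicable (s ∩ T.F) ∧ a.apply (s ∩ T.F) = a'.apply s ∩ T.F :=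
  commit_compilation_projection_general T commit hwf hfresh a' a hcf s happ
end
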